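/- With P, Q standard parabolics determined by S, T, let u, w ∈ W_{S,T} with u ≰ w in Bruhat order, K an open compact subgroup in good position, a strictly dominant for M_Q, i ≥ 0, and g ∈ G with g k a^{-i} ∈ PẇmK for some k ∈ K and m ∈ M_Q. Then PgK ∩ PůQ⁻ = ∅; in particular g ∉ PůQ⁻. -/

import Mathlib

/-- Bruhat order: `v ≤ w` iff some reduced word for `w` has a subword whose product is `v`. -/
def BruhatLE {B W : Type*} [Group W] {M : CoxeterMatrix B} (cs : CoxeterSystem M W)
    (v w : W) : Prop :=
  ∃ l : List B, cs.IsReduced l ∧ cs.wordProd l = w ∧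
    ∃ l' : List B, l'.Sublist l ∧ cs.wordProd l' = v

/-- The standard parabolic subgroup `W(S)` of the Weyl group. -/
def WPar {B W : Type*} [Group W] {M : CoxeterMatrix B} (cs : CoxeterSystem M W)
    (S : Set B) : Subgroup W :=
  Subgroup.closure (cs.simple '' S)

/-- `W_{S,T}`: the set of minimal length double coset representatives in `W(S)\W/W(T)`. -/
def WST {B W : Type*} [Group W] {M : CoxeterMatrix B} (cs : CoxeterSystem M W)
    (S T : Set B) : Set W :=
  {u | ∀ v : W, (∃ x ∈ WPar cs S, ∃ y ∈ WPar cs T, v = x * u * y) →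
    cs.length u ≤ cs.length v}

/-- The double coset `H·ẇ·H'` associated to `w ∈ W`. -/
def bruhatCell {W G : Type*} [Group G] (H H' : Subgroup G) (dot : W → G) (w : W) : Set G :=
  {g | ∃ b1 ∈ H, ∃ b2 ∈ H', g = b1 * dot w * b2}

/-!
Iwahori factorisation `K = (U ∩ K)(M_Q ∩ K)(U⁻ ∩ K)` together with `a⁻ⁱ(U⁻ ∩ K)aⁱ ⊆ K` gives
`K aⁱ K ⊆ Q (U⁻ ∩ K)`. Hence every point of `PgK` has the form `y v` with `y ∈ PẇQ` and
`v ∈ U⁻ ⊆ Q⁻`. If it also lay in `PůQ⁻`, then `y` would lie in `PẇQ ∩ PůQ⁻`, forcing `u ≤ w`.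
-/

section Iwahori

variable {G : Type*} [Group G] {Q Mq U Uneg K : Subgroup G}

theorem exists_eq_mul_of_iwahori
    (hIwahori : ∀ k ∈ K, ∃ x ∈ U ⊓ K, ∃ m ∈ Mq ⊓ K, ∃ v ∈ Uneg ⊓ K, k = x * m * v)
    (hMQ : Mq ≤ Q) (hUQ : U ≤ Q) {k : G} (hk : k ∈ K) :
    ∃ q ∈ Q, ∃ v ∈ Uneg ⊓ K, k = q * v := by
  obtain ⟨x, hx, m, hm, v, hv, rfl⟩ := hIwahori k hk
  exact ⟨x * m, mul_mem (hUQ hx.1) (hMQ hm.1), v, hv, rfl⟩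

theorem exists_mul_mul_eq_mul_of_contracting
    (hK : ∀ k ∈ K, ∃ q ∈ Q, ∃ v ∈ Uneg ⊓ K, k = q * v)
    {b : G} (hb : b ∈ Q) (hcontract : ∀ v ∈ Uneg ⊓ K, b⁻¹ * v * b ∈ K)
    {k₁ k₂ : G} (hk₁ : k₁ ∈ K) (hk₂ : k₂ ∈ K) :
    ∃ q ∈ Q, ∃ v ∈ Uneg ⊓ K, k₁ * b * k₂ = q * v := by
  obtain ⟨q₁, hq₁, v₁, hv₁, rfl⟩ := hK k₁ hk₁
  obtain ⟨q₂, hq₂, v₂, hv₂, hk⟩ := hK _ (K.mul_mem (hcontract v₁ hv₁) hk₂)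
  refine ⟨q₁ * b * q₂, mul_mem (mul_mem hq₁ hb) hq₂, v₂, hv₂, ?_⟩
  calc q₁ * v₁ * b * k₂ = q₁ * b * (b⁻¹ * v₁ * b * k₂) := by group
    _ = q₁ * b * q₂ * v₂ := by rw [hk, mul_assoc (q₁ * b)]

end Iwahori

theorem bruhatCell_mul_mem {W G : Type*} [Group G] {H H' : Subgroup G} {dot : W → G} {w : W}
    {x h : G} (hx : x ∈ bruhatCell H H' dot w) (hh : h ∈ H') :
    x * h ∈ bruhatCell H H' dot w := by
  obtain ⟨b₁, hb₁, b₂, hb₂, rfl⟩ := hx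
  exact ⟨b₁, hb₁, b₂ * h, mul_mem hb₂ hh, by group⟩

theorem support_avoids_lower_cell_general
    {B W G : Type*} [Group W] [Group G]
    {M : CoxeterMatrix B}
    (cs : CoxeterSystem M W) (dot : W → G)
    (P Q Qneg Mq U Uneg K : Subgroup G) (a : G) (S T : Set B)
    (hcrit : ∀ w w' : W, w ∈ WST cs S T → w' ∈ WST cs S T →
      (({g : G | ∃ p ∈ P, ∃ q ∈ Q, g = p * dot w * q} ∩
        {g : G | ∃ p ∈ P, ∃ q ∈ Qneg, g = p * dot w' * q}).Nonempty ↔ BruhatLE cs w' w))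
    (hIwahori : ∀ k ∈ K, ∃ x ∈ U ⊓ K, ∃ m ∈ Mq ⊓ K, ∃ v ∈ Uneg ⊓ K, k = x * m * v)
    (hMQ : Mq ≤ Q) (hUQ : U ≤ Q) (hUnegQneg : Uneg ≤ Qneg)
    (haM : a ∈ Mq)
    (hcontractUneg : ∀ j : ℕ, ∀ v ∈ Uneg ⊓ K, (a ^ j)⁻¹ * v * a ^ j ∈ K)
    (u w : W) (hu : u ∈ WST cs S T) (hw : w ∈ WST cs S T)
    (hnle : ¬ BruhatLE cs u w)
    (i : ℕ) (g : G)
    (hg : ∃ k ∈ K, ∃ m ∈ Mq, ∃ p ∈ P, ∃ k' ∈ K,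
      g * k * (a ^ i)⁻¹ = p * dot w * m * k') :
    (∀ x : G, (∃ p ∈ P, ∃ k ∈ K, x = p * g * k) →
      x ∉ {y : G | ∃ p ∈ P, ∃ q ∈ Qneg, y = p * dot u * q}) ∧
    g ∉ {y : G | ∃ p ∈ P, ∃ q ∈ Qneg, y = p * dot u * q} := by
  obtain ⟨k, hk, m, hm, p, hp, k', hk', heq⟩ := hg
  have hg_eq : g = p * dot w * m * (k' * a ^ i * k⁻¹) := by simp only [← mul_assoc, ← heq]; group
  have hK := fun k (hk : k ∈ K) => exists_eq_mul_of_iwahori hIwahori hMQ hUQ hk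
  have key : ∀ x : G, (∃ p ∈ P, ∃ k ∈ K, x = p * g * k) → x ∉ bruhatCell P Qneg dot u := by
    rintro x ⟨p', hp', k'', hk'', rfl⟩ hxu
    obtain ⟨q, hq, v, hv, hqv⟩ := exists_mul_mul_eq_mul_of_contracting hK
      (Q.pow_mem (hMQ haM) i) (hcontractUneg i) hk' (K.mul_mem (K.inv_mem hk) hk'')
    have hxw : p' * g * k'' * v⁻¹ ∈ bruhatCell P Q dot w := by
      refine ⟨p' * p, mul_mem hp' hp, m * q, mul_mem (hMQ hm) hq, ?_⟩
      calc p' * g * k'' * v⁻¹ = p' * p * dot w * m * (k' * a ^ i * (k⁻¹ * k'')) * v⁻¹ := by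
            rw [hg_eq]; group
        _ = p' * p * dot w * (m * q) := by rw [hqv]; group
    exact hnle ((hcrit w u hw hu).mp
      ⟨_, hxw, bruhatCell_mul_mem hxu (inv_mem (hUnegQneg hv.1))⟩)
  exact ⟨key, key g ⟨1, one_mem P, 1, one_mem K, by group⟩⟩

/-- With `P, Q` standard parabolics determined by `S, T`, let `u, w ∈ W_{S,T}` with `u ≰ w`
in the Bruhat order, `K` an open compact subgroup in good position, `a` strictly dominant
for `M_Q`, `i ≥ 0`, and `g ∈ G` with `g k a^{-i} ∈ P ẇ m K` for some `k ∈ K`, `m ∈ M_Q`.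
Then `PgK ∩ PůQ⁻ = ∅`; in particular `g ∉ PůQ⁻`. -/
theorem support_avoids_lower_cell
    {B W G : Type*} [Group W] [Group G] [TopologicalSpace G] [IsTopologicalGroup G]
    {M : CoxeterMatrix B}
    (cs : CoxeterSystem M W) (Bp Bm : Subgroup G) (dot : W → G)
    (P Q Qneg Mq U Uneg K : Subgroup G) (a : G) (S T : Set B)
    (hdot1 : dot 1 = 1)
    (hP : (P : Set G) = ⋃ x ∈ WPar cs S, bruhatCell Bp Bp dot x)
    (hQ : (Q : Set G) = ⋃ y ∈ WPar cs T, bruhatCell Bp Bp dot y)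
    (hQneg : (Qneg : Set G) = ⋃ y ∈ WPar cs T, bruhatCell Bm Bm dot y)
    (hcrit : ∀ w w' : W, w ∈ WST cs S T → w' ∈ WST cs S T →
      (({g : G | ∃ p ∈ P, ∃ q ∈ Q, g = p * dot w * q} ∩
        {g : G | ∃ p ∈ P, ∃ q ∈ Qneg, g = p * dot w' * q}).Nonempty ↔ BruhatLE cs w' w))
    (hKopen : IsOpen (K : Set G)) (hKcompact : IsCompact (K : Set G))
    (hIwahori : ∀ k ∈ K, ∃ x ∈ U ⊓ K, ∃ m ∈ Mq ⊓ K, ∃ v ∈ Uneg ⊓ K, k = x * m * v)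
    (hMQ : Mq ≤ Q) (hUQ : U ≤ Q) (hUnegQneg : Uneg ≤ Qneg)
    (haM : a ∈ Mq) (haZ : ∀ m ∈ Mq, a * m = m * a)
    (hcontractU : ∀ j : ℕ, ∀ x ∈ U ⊓ K, a ^ j * x * (a ^ j)⁻¹ ∈ K)
    (hcontractUneg : ∀ j : ℕ, ∀ v ∈ Uneg ⊓ K, (a ^ j)⁻¹ * v * a ^ j ∈ K)
    (u w : W) (hu : u ∈ WST cs S T) (hw : w ∈ WST cs S T)
    (hnle : ¬ BruhatLE cs u w)
    (i : ℕ) (g : G)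
    (hg : ∃ k ∈ K, ∃ m ∈ Mq, ∃ p ∈ P, ∃ k' ∈ K,
      g * k * (a ^ i)⁻¹ = p * dot w * m * k') :
    (∀ x : G, (∃ p ∈ P, ∃ k ∈ K, x = p * g * k) →
      x ∉ {y : G | ∃ p ∈ P, ∃ q ∈ Qneg, y = p * dot u * q}) ∧
    g ∉ {y : G | ∃ p ∈ P, ∃ q ∈ Qneg, y = p * dot u * q} :=
  support_avoids_lower_cell_general cs dot P Q Qneg Mq U Uneg K a S T hcrit hIwahori hMQ hUQ
    hUnegQneg haM hcontractUneg u w hu hw hnle i g hg
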